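/- arXiv:1805.06951 — 2 statements merged into one kernel-verified Lean document; each statement's English description precedes it below -/
import Mathlib

section
/- Fix σ_x, σ_y > 0, ε ∈ ℝ^n with ε_i > 0, w ∈ ℝ^n, x, b̂ ∈ ℝ^n. The function F(μ, v) = (1/σ_x²)(Σ_i w_i(x_i − b̂_i))μ − (1/2)(1/σ_y² + (1/σ_x²)Σ_i w_i²/ε_i)(μ² + v) + (1/2)log v over μ ∈ ℝ, v > 0 is uniquely maximized at v* = 1/(1/σ_y² + (1/σ_x²)Σ_i w_i²/ε_i) and μ* = (Σ_i w_i(x_i − b̂_i))/(σ_x²/σ_y² + Σ_i w_i²/ε_i). -/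
/-!
Completing the square in `μ` and writing `C v = t`, the objective equals its value at
`(A / C, 1 / C)` minus `C / 2 · (μ - A / C)²` minus `½ (t - 1 - log t)`. Both subtracted terms
are nonnegative (the second by `log t ≤ t - 1`), and they vanish together only at `μ = A / C`,
`t = 1`.
-/

open Real

/-- The FM bound restricted to the Gaussian factor `N(μ, v)`, with the linear coefficient
`A = (1/σx²) ∑ i, w i (x i - bh i)` and the precision `C = 1/σy² + (1/σx²) ∑ i, w i² / ε i`. -/
noncomputable def gaussianFactorBound (A C μ v : ℝ) : ℝ :=
  A * μ - 1 / 2 * C * (μ ^ 2 + v) + 1 / 2 * log v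

theorem gaussianFactorBound_eq_sub {A C : ℝ} (hC : 0 < C) (μ : ℝ) {v : ℝ} (hv : 0 < v) :
    gaussianFactorBound A C μ v =
      gaussianFactorBound A C (A / C) (1 / C)
        - C / 2 * (μ - A / C) ^ 2 - 1 / 2 * (C * v - 1 - log (C * v)) := by
  unfold gaussianFactorBound
  rw [log_mul hC.ne' hv.ne', one_div C, log_inv]
  field_simp
  ring

theorem gaussianFactorBound_lt {A C μ v : ℝ} (hC : 0 < C) (hv : 0 < v)
    (hne : (μ, v) ≠ (A / C, 1 / C)) :
    gaussianFactorBound A C μ v < gaussianFactorBound A C (A / C) (1 / C) := by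
  rw [gaussianFactorBound_eq_sub hC μ hv]
  have hCv : 0 < C * v := mul_pos hC hv
  have hlog : log (C * v) ≤ C * v - 1 := log_le_sub_one_of_pos hCv
  by_cases hμ : μ = A / C
  · have hCv1 : C * v ≠ 1 := by
      intro h
      exact hne (by rw [hμ, eq_one_div_of_mul_eq_one_right h])
    have hlt := log_lt_sub_one_of_pos hCv hCv1
    nlinarith [sq_nonneg (μ - A / C)]
  · have : 0 < (μ - A / C) ^ 2 := by positivity [sub_ne_zero.mpr hμ]
    nlinarith

/-- The FM bound restricted to one Gaussian variational factor `N(μ, v)`,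
`F(μ,v) = (1/σx²)(∑ i, w i (x i - bh i)) μ - ½(1/σy² + (1/σx²)∑ i, w i²/ε i)(μ² + v)
+ ½ log v`, is uniquely maximized at
`v* = 1/(1/σy² + (1/σx²)∑ i, w i²/ε i)` and
`μ* = (∑ i, w i (x i - bh i))/(σx²/σy² + ∑ i, w i²/ε i)`. -/
theorem fm_variational_update {n : ℕ} (σx σy : ℝ) (hσx : 0 < σx) (hσy : 0 < σy)
    (ε w x bh : Fin n → ℝ) (hε : ∀ i, 0 < ε i) :
    ∀ μ v : ℝ, 0 < v →
      (μ, v) ≠ ((∑ i, w i * (x i - bh i)) / (σx ^ 2 / σy ^ 2 + ∑ i, w i ^ 2 / ε i),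
                 1 / (1 / σy ^ 2 + (1 / σx ^ 2) * ∑ i, w i ^ 2 / ε i)) →
      (1 / σx ^ 2) * (∑ i, w i * (x i - bh i)) * μ
          - (1 / 2) * (1 / σy ^ 2 + (1 / σx ^ 2) * ∑ i, w i ^ 2 / ε i) * (μ ^ 2 + v)
          + (1 / 2) * Real.log v
        < (1 / σx ^ 2) * (∑ i, w i * (x i - bh i))
              * ((∑ i, w i * (x i - bh i)) / (σx ^ 2 / σy ^ 2 + ∑ i, w i ^ 2 / ε i))
          - (1 / 2) * (1 / σy ^ 2 + (1 / σx ^ 2) * ∑ i, w i ^ 2 / ε i)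
              * (((∑ i, w i * (x i - bh i)) / (σx ^ 2 / σy ^ 2 + ∑ i, w i ^ 2 / ε i)) ^ 2
                + 1 / (1 / σy ^ 2 + (1 / σx ^ 2) * ∑ i, w i ^ 2 / ε i))
          + (1 / 2) * Real.log (1 / (1 / σy ^ 2 + (1 / σx ^ 2) * ∑ i, w i ^ 2 / ε i)) := by
  intro μ v hv hne
  have hS : 0 ≤ ∑ i, w i ^ 2 / ε i :=
    Finset.sum_nonneg fun i _ => div_nonneg (sq_nonneg _) (hε i).le
  have hC : 0 < 1 / σy ^ 2 + (1 / σx ^ 2) * ∑ i, w i ^ 2 / ε i := by positivity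
  have hμ : (∑ i, w i * (x i - bh i)) / (σx ^ 2 / σy ^ 2 + ∑ i, w i ^ 2 / ε i)
      = (1 / σx ^ 2) * (∑ i, w i * (x i - bh i))
        / (1 / σy ^ 2 + (1 / σx ^ 2) * ∑ i, w i ^ 2 / ε i) := by
    field_simp
  rw [hμ] at hne ⊢
  exact gaussianFactorBound_lt hC hv hne
end

section
/- In the Gaussian FM update, if for coordinate j we have ε_{ij} = 1 for all i with w_{ij} ≠ 0, then the FM update for μ_j coincides with the exact coordinate ascent (CAVI) update: μ_j* = (Σ_i w_{ij}(x_i − b_i − Σ_{j'≠j} w_{ij'} μ_{j'}))/(σ_x²/σ_y² + Σ_i w_{ij}²). -/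
/-! Where `w i j ≠ 0` we have `ε i j = 1`, so the FM bias `bh i` is exactly the partial
residual offset `b i + ∑_{j' ≠ j} w i j' * μ j'` of CAVI and `w i j ^ 2 / ε i j = w i j ^ 2`;
where `w i j = 0` the `i`-th terms of both sums vanish anyway. -/

open Finset

theorem Finset.sum_mul_congr_of_ne_zero {ι R : Type*} [NonUnitalNonAssocSemiring R]
    {s : Finset ι} {a f g : ι → R} (h : ∀ i ∈ s, a i ≠ 0 → f i = g i) :
    ∑ i ∈ s, a i * f i = ∑ i ∈ s, a i * g i :=
  sum_congr rfl fun i hi => by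
    by_cases ha : a i = 0
    · simp only [ha, zero_mul]
    · rw [h i hi ha]

theorem fm_update_eq_cavi_general {n m : ℕ} (σx σy : ℝ)
    (w : Fin n → Fin m → ℝ) (x b : Fin n → ℝ) (μ : Fin m → ℝ)
    (ε : Fin n → Fin m → ℝ) (j : Fin m)
    (hε1 : ∀ i, w i j ≠ 0 → ε i j = 1)
    (etaBar bh : Fin n → ℝ)
    (hη : ∀ i, etaBar i = b i + ∑ j', w i j' * μ j')
    (hbh : ∀ i, bh i = etaBar i - w i j * μ j / ε i j) :
    (∑ i, w i j * (x i - bh i)) / (σx ^ 2 / σy ^ 2 + ∑ i, (w i j) ^ 2 / ε i j)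
      = (∑ i, w i j * (x i - b i - ∑ j' ∈ Finset.univ.erase j, w i j' * μ j'))
          / (σx ^ 2 / σy ^ 2 + ∑ i, (w i j) ^ 2) := by
  have hnum : ∑ i, w i j * (x i - bh i)
      = ∑ i, w i j * (x i - b i - ∑ j' ∈ univ.erase j, w i j' * μ j') :=
    sum_mul_congr_of_ne_zero fun i _ hw => by
      rw [hbh, hη, hε1 i hw, div_one, sum_erase_eq_sub (mem_univ j)]
      ring
  have hden : ∑ i, w i j ^ 2 / ε i j = ∑ i, w i j ^ 2 := by
    simp only [sq, mul_div_assoc]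
    exact sum_mul_congr_of_ne_zero fun i _ hw => by rw [hε1 i hw, div_one]
  rw [hnum, hden]

/-- If `ε i j = 1` for every `i` with `w i j ≠ 0`, the Gaussian FM update for
coordinate `j` coincides with the exact CAVI coordinate update. -/
theorem fm_update_eq_cavi {n m : ℕ} (σx σy : ℝ) (hσx : 0 < σx) (hσy : 0 < σy)
    (w : Fin n → Fin m → ℝ) (x b : Fin n → ℝ) (μ : Fin m → ℝ)
    (ε : Fin n → Fin m → ℝ) (j : Fin m)
    (hε0 : ∀ i, 0 < ε i j) (hε1 : ∀ i, w i j ≠ 0 → ε i j = 1)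
    (etaBar bh : Fin n → ℝ)
    (hη : ∀ i, etaBar i = b i + ∑ j', w i j' * μ j')
    (hbh : ∀ i, bh i = etaBar i - w i j * μ j / ε i j) :
    (∑ i, w i j * (x i - bh i)) / (σx ^ 2 / σy ^ 2 + ∑ i, (w i j) ^ 2 / ε i j)
      = (∑ i, w i j * (x i - b i - ∑ j' ∈ Finset.univ.erase j, w i j' * μ j'))
          / (σx ^ 2 / σy ^ 2 + ∑ i, (w i j) ^ 2) :=
  fm_update_eq_cavi_general σx σy w x b μ ε j hε1 etaBar bh hη hbh
end
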